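/- arXiv:2211.06264 — 5 statements merged into one kernel-verified Lean document; each statement's English description precedes it below -/
import Mathlib

section
/- For every real t ≥ 1 and every positive integer n, the partial sum of μ(a)/a over integers a ≤ t coprime to n is bounded in absolute value by C · n/φ(n), where C is an absolute constant. -/
/-!
Write `T_n(k) = ∑_{a ≤ k, (a, n) = 1} μ(a)/a`; it only depends on the primes dividing `n`.
For `n = 1` the bound `|T_1(k)| ≤ 2` comes from `∑_{a ≤ k} μ(a) ⌊k/a⌋ = 1`. If `p ∤ m` is prime,
splitting off the multiples of `p` gives `T_m(k) = T_{pm}(k) - T_{pm}(k/p)/p`, so by induction on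
`k` a uniform bound `B` for `T_m` yields the bound `B · p/(p-1)` for `T_{pm}`. Adding the prime
factors of `n` one at a time gives `|T_n(k)| ≤ 2 ∏_{p ∣ n} p/(p-1) = 2 n/φ(n)`.
-/

open ArithmeticFunction Finset
open scoped ArithmeticFunction.Moebius

theorem Nat.sum_Ioc_sum_divisors {M : Type*} [AddCommMonoid M] (f : ℕ → M) (k : ℕ) :
    ∑ m ∈ Ioc 0 k, ∑ d ∈ m.divisors, f d = ∑ d ∈ Ioc 0 k, (k / d) • f d := by
  rw [sum_comm' (t' := Ioc 0 k) (s' := fun d => {m ∈ Ioc 0 k | d ∣ m})]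
  · simp only [sum_const, Nat.Ioc_filter_dvd_card_eq_div]
  · intro m d
    simp only [mem_Ioc, Nat.mem_divisors, mem_filter]
    constructor
    · rintro ⟨⟨hm, hmk⟩, hdm, -⟩
      exact ⟨⟨⟨hm, hmk⟩, hdm⟩, Nat.pos_of_dvd_of_pos hdm hm, (Nat.le_of_dvd hm hdm).trans hmk⟩
    · rintro ⟨⟨hm, hdm⟩, -⟩
      exact ⟨hm, hdm, hm.1.ne'⟩

namespace ArithmeticFunction

theorem sum_Icc_moebius_mul_div {R : Type*} [Ring R] {k : ℕ} (hk : 1 ≤ k) :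
    ∑ d ∈ Icc 1 k, (μ d : R) * (k / d : ℕ) = 1 := by
  have hdiv (m : ℕ) : ∑ d ∈ m.divisors, (μ d : R) = if m = 1 then 1 else 0 := by
    simpa only [coe_mul_zeta_apply, intCoe_apply, one_apply] using
      congrArg (· m) (coe_moebius_mul_coe_zeta (R := R))
  have h := Nat.sum_Ioc_sum_divisors (fun d => (μ d : R)) k
  simp only [hdiv, sum_ite_eq', mem_Ioc, hk, and_true, zero_lt_one, if_true, nsmul_eq_mul] at h
  exact (sum_congr rfl fun d _ => (Nat.cast_comm _ _).symm).trans h.symm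

theorem abs_sum_Icc_moebius_div_le_two (k : ℕ) : |∑ a ∈ Icc 1 k, (μ a : ℝ) / a| ≤ 2 := by
  rcases Nat.eq_zero_or_pos k with rfl | hk
  · simp
  have hk' : (0 : ℝ) < k := by exact_mod_cast hk
  have hsplit : (k : ℝ) * ∑ a ∈ Icc 1 k, (μ a : ℝ) / a
      = 1 + ∑ a ∈ Icc 1 k, (μ a : ℝ) * ((k % a : ℕ) / a) := by
    rw [← sum_Icc_moebius_mul_div (R := ℝ) hk, mul_sum, ← sum_add_distrib]
    refine sum_congr rfl fun a ha => ?_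
    have ha : (a : ℝ) ≠ 0 := by have := (mem_Icc.1 ha).1; positivity
    have hdm : (a : ℝ) * (k / a : ℕ) + (k % a : ℕ) = k := by exact_mod_cast Nat.div_add_mod k a
    rw [← hdm]
    field_simp
  have hrem : |∑ a ∈ Icc 1 k, (μ a : ℝ) * ((k % a : ℕ) / a)| ≤ k := by
    refine (abs_sum_le_sum_abs _ _).trans ?_
    refine (sum_le_card_nsmul _ _ 1 fun a ha => ?_).trans (by simp)
    have ha : 0 < a := (mem_Icc.1 ha).1
    rw [abs_mul, abs_of_nonneg (by positivity : (0 : ℝ) ≤ (k % a : ℕ) / a)]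
    refine mul_le_one₀ (by exact_mod_cast abs_moebius_le_one) (by positivity)
      (div_le_one_of_le₀ ?_ (by positivity))
    exact_mod_cast (Nat.mod_lt k ha).le
  have hmul : (k : ℝ) * |∑ a ∈ Icc 1 k, (μ a : ℝ) / a| ≤ k * 2 := by
    rw [← abs_of_pos hk', ← abs_mul, hsplit, abs_of_pos hk']
    have : (1 : ℝ) ≤ k := by exact_mod_cast hk
    linarith [abs_add_le 1 (∑ a ∈ Icc 1 k, (μ a : ℝ) * ((k % a : ℕ) / a)), abs_one (α := ℝ)]
  exact le_of_mul_le_mul_left hmul hk'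

theorem moebius_prime_mul {p : ℕ} (hp : p.Prime) (b : ℕ) :
    μ (p * b) = if p ∣ b then 0 else -μ b := by
  split_ifs with hpb
  · refine moebius_eq_zero_of_not_squarefree fun hsq => ?_
    exact hp.one_lt.ne' (Nat.isUnit_iff.1 (hsq p (mul_dvd_mul_left p hpb)))
  · rw [isMultiplicative_moebius.map_mul_of_coprime ((hp.coprime_iff_not_dvd).2 hpb),
      moebius_apply_prime hp, neg_one_mul]

end ArithmeticFunction

noncomputable def coprimeMoebiusSum (n k : ℕ) : ℝ :=
  ∑ a ∈ (Icc 1 k).filter (·.Coprime n), (μ a : ℝ) / a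

theorem filter_coprime_not_coprime_eq_image {p m : ℕ} (hp : p.Prime) (hpm : ¬ p ∣ m) (k : ℕ) :
    ((Icc 1 k).filter (·.Coprime m)).filter (¬ ·.Coprime p)
      = ((Icc 1 (k / p)).filter (·.Coprime m)).image (p * ·) := by
  ext a
  simp only [mem_filter, mem_image, mem_Icc, Nat.coprime_comm.trans hp.coprime_iff_not_dvd,
    not_not]
  constructor
  · rintro ⟨⟨⟨ha, hak⟩, ham⟩, b, rfl⟩
    refine ⟨b, ⟨⟨Nat.pos_of_mul_pos_left ha, ?_⟩, Nat.Coprime.coprime_mul_left ham⟩, rfl⟩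
    rwa [Nat.le_div_iff_mul_le hp.pos, mul_comm]
  · rintro ⟨b, ⟨⟨hb, hbk⟩, hbm⟩, rfl⟩
    refine ⟨⟨⟨Nat.mul_pos hp.pos hb, ?_⟩, ((hp.coprime_iff_not_dvd).2 hpm).mul_left hbm⟩,
      dvd_mul_right p b⟩
    rwa [Nat.le_div_iff_mul_le hp.pos, mul_comm] at hbk

theorem coprimeMoebiusSum_eq_sub {p m : ℕ} (hp : p.Prime) (hpm : ¬ p ∣ m) (k : ℕ) :
    coprimeMoebiusSum m k
      = coprimeMoebiusSum (p * m) k - coprimeMoebiusSum (p * m) (k / p) / p := by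
  have hp0 : (p : ℝ) ≠ 0 := by exact_mod_cast hp.ne_zero
  unfold coprimeMoebiusSum
  rw [← sum_filter_add_sum_filter_not _ (·.Coprime p), filter_coprime_not_coprime_eq_image hp hpm,
    sum_image fun _ _ _ _ => Nat.eq_of_mul_eq_mul_left hp.pos, filter_filter]
  simp only [Nat.coprime_mul_iff_right, and_comm (a := Nat.Coprime _ p)]
  rw [sub_eq_add_neg]
  congr 1
  rw [← filter_filter, sum_div, ← sum_neg_distrib, eq_comm, sum_filter]
  refine sum_congr rfl fun b hb => ?_
  have hb : (b : ℝ) ≠ 0 := by have := (mem_Icc.1 (mem_filter.1 hb).1).1; positivity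
  simp only [moebius_prime_mul hp, Nat.coprime_comm.trans hp.coprime_iff_not_dvd]
  split_ifs <;> field_simp <;> push_cast <;> ring

theorem abs_coprimeMoebiusSum_prime_mul_le {p m : ℕ} (hp : p.Prime) (hpm : ¬ p ∣ m) {B : ℝ}
    (hB : ∀ k, |coprimeMoebiusSum m k| ≤ B) (k : ℕ) :
    |coprimeMoebiusSum (p * m) k| ≤ B * (p / (p - 1)) := by
  have hp1 : (1 : ℝ) < p := by exact_mod_cast hp.one_lt
  induction k using Nat.strong_induction_on with
  | _ k ih =>
  rcases Nat.eq_zero_or_pos k with rfl | hk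
  · have hB0 : 0 ≤ B := (abs_nonneg _).trans (hB 0)
    have : 0 ≤ (p : ℝ) / (p - 1) := div_nonneg (by linarith) (by linarith)
    simpa [coprimeMoebiusSum] using mul_nonneg hB0 this
  calc |coprimeMoebiusSum (p * m) k|
      = |coprimeMoebiusSum m k + coprimeMoebiusSum (p * m) (k / p) / p| := by
        rw [coprimeMoebiusSum_eq_sub hp hpm k, sub_add_cancel]
    _ ≤ |coprimeMoebiusSum m k| + |coprimeMoebiusSum (p * m) (k / p)| / p :=
        (abs_add_le _ _).trans_eq (by rw [abs_div, Nat.abs_cast])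
    _ ≤ B + B * (p / (p - 1)) / p := by
        gcongr
        exacts [hB k, ih (k / p) (Nat.div_lt_self hk hp.one_lt)]
    _ = B * (p / (p - 1)) := by
        field_simp [show (p : ℝ) - 1 ≠ 0 by linarith]
        ring

theorem abs_coprimeMoebiusSum_prod_le {s : Finset ℕ} (hs : ∀ p ∈ s, p.Prime) (k : ℕ) :
    |coprimeMoebiusSum (∏ p ∈ s, p) k| ≤ 2 * ∏ p ∈ s, (p : ℝ) / (p - 1) := by
  induction s using Finset.induction_on generalizing k with
  | empty => simpa [coprimeMoebiusSum] using abs_sum_Icc_moebius_div_le_two k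
  | insert p s hps ih =>
    have hp := hs p (mem_insert_self p s)
    have hp_not_dvd : ¬ p ∣ ∏ q ∈ s, q := by
      rw [hp.prime.dvd_finsetProd_iff]
      rintro ⟨q, hq, hpq⟩
      rw [(Nat.prime_dvd_prime_iff_eq hp (hs q (mem_insert_of_mem hq))).1 hpq] at hps
      exact hps hq
    rw [prod_insert hps, prod_insert hps, mul_left_comm, mul_comm ((p : ℝ) / (p - 1))]
    exact abs_coprimeMoebiusSum_prime_mul_le hp hp_not_dvd
      (ih fun q hq => hs q (mem_insert_of_mem hq)) k

theorem Nat.coprime_prod_primeFactors_iff {a n : ℕ} (hn : n ≠ 0) :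
    a.Coprime (∏ p ∈ n.primeFactors, p) ↔ a.Coprime n :=
  ⟨fun h => (h.pow_right n).coprime_dvd_right (Nat.dvd_prod_primeFactors_pow_self hn),
    fun h => h.coprime_dvd_right (Nat.prod_primeFactors_dvd n)⟩

theorem Nat.cast_div_totient_eq_prod {n : ℕ} (hn : n ≠ 0) :
    (n : ℝ) / n.totient = ∏ p ∈ n.primeFactors, (p : ℝ) / (p - 1) := by
  have hprod : ∏ p ∈ n.primeFactors, ((p - 1 : ℕ) : ℝ) = ∏ p ∈ n.primeFactors, ((p : ℝ) - 1) :=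
    prod_congr rfl fun p hp => Nat.cast_pred (Nat.pos_of_mem_primeFactors hp)
  have h := congrArg (Nat.cast : ℕ → ℝ) (Nat.totient_mul_prod_primeFactors n)
  push_cast [Nat.cast_prod, hprod] at h
  rw [prod_div_distrib, div_eq_div_iff (by positivity), ← h, mul_comm]
  refine prod_ne_zero_iff.2 fun p hp => sub_ne_zero.2 ?_
  exact_mod_cast (Nat.prime_of_mem_primeFactors hp).one_lt.ne'

/-- For every real `t ≥ 1` and every positive integer `n`, the partial sum of `μ(a)/a`
over integers `a ≤ t` coprime to `n` is bounded by `C · n / φ(n)` for an absolute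
constant `C`. -/
theorem moebius_partial_sum_coprime_bound :
    ∃ C : ℝ, 0 < C ∧ ∀ t : ℝ, 1 ≤ t → ∀ n : ℕ, 0 < n →
      |∑ a ∈ (Finset.Icc 1 ⌊t⌋₊).filter (fun a => Nat.Coprime a n),
          (μ a : ℝ) / a| ≤ C * n / Nat.totient n := by
  refine ⟨2, two_pos, fun t _ n hn => ?_⟩
  have hsum : ∑ a ∈ (Icc 1 ⌊t⌋₊).filter (·.Coprime n), (μ a : ℝ) / a
      = coprimeMoebiusSum (∏ p ∈ n.primeFactors, p) ⌊t⌋₊ := by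
    simp only [coprimeMoebiusSum, Nat.coprime_prod_primeFactors_iff hn.ne']
  rw [hsum, mul_div_assoc, Nat.cast_div_totient_eq_prod hn.ne']
  exact abs_coprimeMoebiusSum_prod_le (fun p => Nat.prime_of_mem_primeFactors) _
end

section
/- Let q be a positive integer and s a complex number. Then Σ_{w|q} μ(q/w) φ(w) Σ_{f|q, (f,w)=1} μ(f) (φ(q/f)/q) w^{-s} Π_{p|f}(1 - p^{-s}) = φ*(q) · q^{-s} · Π_{p|q}(1 - p^{s-1}), where φ*(q) = q Π_{p||q}(1 - 2/p) Π_{p²|q}(1 - 1/p)² is the number of primitive Dirichlet characters modulo q. -/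
/-!
Both sides are multiplicative functions of `q`: for coprime `q = m n` the divisors `w`, `f` of `q`
split uniquely as products of divisors of `m` and of `n`, and every factor of the summand
(including the condition `(f, w) = 1`) splits accordingly. So it suffices to take `q = p^k`.
There `μ(f)` leaves only `f ∈ {1, p}` and `μ(q/w)` only `w ∈ {p^k, p^(k-1)}`; since `f = p` needs
`w = 1`, it contributes only when `k = 1`, which is exactly where the Euler factor of `φ*`
changes from `(1 - 1/p)²` to `1 - 2/p`.
-/

open ArithmeticFunction Finset
open scoped ArithmeticFunction.Moebius

/-- The number of primitive Dirichlet characters modulo `q`: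
`φ*(q) = q · Π_{p‖q} (1 - 2/p) · Π_{p²∣q} (1 - 1/p)²`. -/
noncomputable def phiStar (q : ℕ) : ℝ :=
  q * (∏ p ∈ q.primeFactors.filter (fun p => ¬ p ^ 2 ∣ q), (1 - 2 / (p : ℝ)))
    * (∏ p ∈ q.primeFactors.filter (fun p => p ^ 2 ∣ q), (1 - 1 / (p : ℝ)) ^ 2)

theorem Complex.natCast_pow_cpow (p k : ℕ) (z : ℂ) :
    ((p ^ k : ℕ) : ℂ) ^ z = ((p : ℂ) ^ z) ^ k := by
  rw [Nat.cast_pow, ← Complex.natCast_cpow_natCast_mul, Complex.cpow_nat_mul]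

section CoprimeFactors

variable {m n : ℕ}

theorem Nat.Coprime.coprime_mul_mul_iff {a b c d : ℕ} (h : m.Coprime n) (ha : a ∣ m)
    (hb : b ∣ n) (hc : c ∣ m) (hd : d ∣ n) :
    (c * d).Coprime (a * b) ↔ c.Coprime a ∧ d.Coprime b := by
  have hcb : c.Coprime b := (h.coprime_dvd_left hc).coprime_dvd_right hb
  have hda : d.Coprime a := (h.symm.coprime_dvd_left hd).coprime_dvd_right ha
  rw [Nat.coprime_mul_iff_left, Nat.coprime_mul_iff_right, Nat.coprime_mul_iff_right]
  exact ⟨fun h => ⟨h.1.1, h.2.2⟩, fun h => ⟨⟨h.1, hcb⟩, hda, h.2⟩⟩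

theorem Nat.Coprime.div_coprime_div {a b : ℕ} (h : m.Coprime n) (ha : a ∣ m) (hb : b ∣ n) :
    (m / a).Coprime (n / b) :=
  (h.coprime_dvd_left (Nat.div_dvd_of_dvd ha)).coprime_dvd_right (Nat.div_dvd_of_dvd hb)

theorem Nat.Coprime.sum_divisors_mul_eq_sum_sum {R : Type*} [AddCommMonoid R] (h : m.Coprime n)
    (f : ℕ → R) :
    ∑ d ∈ (m * n).divisors, f d = ∑ a ∈ m.divisors, ∑ b ∈ n.divisors, f (a * b) := by
  rw [h.divisors_mul, sum_map]
  exact (sum_attach (m.divisors ×ˢ n.divisors) fun x => f (x.1 * x.2)).trans (sum_product _ _ _)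

theorem Nat.Coprime.sum_divisors_sum_divisors_mul {R : Type*} [CommSemiring R] (h : m.Coprime n)
    (G : ℕ → ℕ → ℕ → R)
    (hG : ∀ a ∈ m.divisors, ∀ b ∈ n.divisors, ∀ c ∈ m.divisors, ∀ d ∈ n.divisors,
      G (m * n) (a * b) (c * d) = G m a c * G n b d) :
    ∑ w ∈ (m * n).divisors, ∑ f ∈ (m * n).divisors, G (m * n) w f =
      (∑ w ∈ m.divisors, ∑ f ∈ m.divisors, G m w f) *
        ∑ w ∈ n.divisors, ∑ f ∈ n.divisors, G n w f := by
  simp_rw [h.sum_divisors_mul_eq_sum_sum, sum_mul_sum]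
  exact sum_congr rfl fun a ha => sum_congr rfl fun b hb => sum_congr rfl fun c hc =>
    sum_congr rfl fun d hd => hG a ha b hb c hc d hd

theorem Nat.Coprime.prod_primeFactors_mul {M : Type*} [CommMonoid M] (hm : m ≠ 0) (hn : n ≠ 0)
    (h : m.Coprime n) (F : ℕ → ℕ → M) (hFm : ∀ p ∈ m.primeFactors, F (m * n) p = F m p)
    (hFn : ∀ p ∈ n.primeFactors, F (m * n) p = F n p) :
    ∏ p ∈ (m * n).primeFactors, F (m * n) p =
      (∏ p ∈ m.primeFactors, F m p) * ∏ p ∈ n.primeFactors, F n p := by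
  rw [Nat.primeFactors_mul hm hn, prod_union h.disjoint_primeFactors]
  exact congr_arg₂ _ (prod_congr rfl hFm) (prod_congr rfl hFn)

end CoprimeFactors

section PrimePowers

variable {R : Type*} [CommRing R] {p : ℕ}

theorem Nat.Prime.sum_divisors_prime_pow_moebius_mul (hp : p.Prime) {k : ℕ} (hk : k ≠ 0)
    (g : ℕ → R) : ∑ d ∈ (p ^ k).divisors, (μ d : R) * g d = g 1 - g p := by
  obtain ⟨j, rfl⟩ := Nat.exists_eq_succ_of_ne_zero hk
  have hvanish : ∀ i, (μ (p ^ (i + 2)) : R) = 0 := fun i => by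
    rw [moebius_apply_prime_pow hp (by omega), if_neg (by omega), Int.cast_zero]
  simp only [Nat.sum_divisors_prime_pow hp, sum_range_succ', hvanish, zero_mul, sum_const_zero,
    zero_add, pow_one, pow_zero, moebius_apply_prime hp, moebius_apply_one]
  push_cast
  ring

theorem Nat.Prime.sum_divisors_prime_pow_moebius_div_mul (hp : p.Prime) (j : ℕ) (g : ℕ → R) :
    ∑ d ∈ (p ^ (j + 1)).divisors, (μ (p ^ (j + 1) / d) : R) * g d =
      g (p ^ (j + 1)) - g (p ^ j) := by
  rw [← Nat.sum_divisorsAntidiagonal' fun a b => (μ a : R) * g b,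
    Nat.sum_divisorsAntidiagonal fun a b => (μ a : R) * g b,
    hp.sum_divisors_prime_pow_moebius_mul (Nat.succ_ne_zero j),
    Nat.div_one, pow_succ, Nat.mul_div_cancel _ hp.pos]

end PrimePowers

theorem phiStar_eq_mul_prod (q : ℕ) :
    phiStar q = q * ∏ p ∈ q.primeFactors,
      if p ^ 2 ∣ q then (1 - 1 / (p : ℝ)) ^ 2 else 1 - 2 / (p : ℝ) := by
  rw [phiStar, prod_ite, mul_assoc, mul_comm (∏ p ∈ _ with _, _)]

theorem phiStar_mul {m n : ℕ} (hm : m ≠ 0) (hn : n ≠ 0) (h : m.Coprime n) :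
    phiStar (m * n) = phiStar m * phiStar n := by
  have hsq {a b : ℕ} (hab : a.Coprime b) {p : ℕ} (hp : p ∈ a.primeFactors) :
      p ^ 2 ∣ a * b ↔ p ^ 2 ∣ a :=
    ⟨((hab.coprime_dvd_left (Nat.dvd_of_mem_primeFactors hp)).pow_left 2).dvd_of_dvd_mul_right,
      (Dvd.dvd.mul_right · b)⟩
  simp only [phiStar_eq_mul_prod]
  rw [h.prod_primeFactors_mul hm hn
      (fun q p => if p ^ 2 ∣ q then (1 - 1 / (p : ℝ)) ^ 2 else 1 - 2 / (p : ℝ))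
      (fun p hp => by simp only [hsq h hp]) (fun p hp => by simp only [mul_comm m, hsq h.symm hp]),
    Nat.cast_mul]
  ring

theorem phiStar_prime_pow {p k : ℕ} (hp : p.Prime) (hk : k ≠ 0) :
    phiStar (p ^ k) = (p : ℝ) ^ k * if 2 ≤ k then (1 - 1 / (p : ℝ)) ^ 2 else 1 - 2 / (p : ℝ) := by
  simp only [phiStar_eq_mul_prod, Nat.primeFactors_prime_pow hk hp, prod_singleton,
    Nat.pow_dvd_pow_iff_le_right hp.one_lt, Nat.cast_pow]

namespace DivisorSumIdentity

variable (s : ℂ)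

noncomputable def weight (q w f : ℕ) : ℂ :=
  if f.Coprime w then
    (Nat.totient w : ℂ) * ((Nat.totient (q / f) : ℂ) / q) * (w : ℂ) ^ (-s) *
      ∏ p ∈ f.primeFactors, (1 - (p : ℂ) ^ (-s))
  else 0

noncomputable def moebiusDoubleSum : ArithmeticFunction ℂ :=
  ⟨fun q => ∑ w ∈ q.divisors, ∑ f ∈ q.divisors, (μ (q / w) : ℂ) * μ f * weight s q w f, by simp⟩

noncomputable def phiStarCpowProd : ArithmeticFunction ℂ :=
  ⟨fun q => phiStar q * (q : ℂ) ^ (-s) * ∏ p ∈ q.primeFactors, (1 - (p : ℂ) ^ (s - 1)),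
    by simp [phiStar]⟩

theorem moebiusDoubleSum_apply (q : ℕ) : moebiusDoubleSum s q =
    ∑ w ∈ q.divisors, ∑ f ∈ q.divisors, (μ (q / w) : ℂ) * μ f * weight s q w f := rfl

theorem phiStarCpowProd_apply (q : ℕ) : phiStarCpowProd s q =
    phiStar q * (q : ℂ) ^ (-s) * ∏ p ∈ q.primeFactors, (1 - (p : ℂ) ^ (s - 1)) := rfl

theorem weight_mul {m n a b c d : ℕ} (h : m.Coprime n) (ha : a ∣ m) (hb : b ∣ n) (hc : c ∣ m)
    (hd : d ∣ n) (hc0 : c ≠ 0) (hd0 : d ≠ 0) :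
    weight s (m * n) (a * b) (c * d) = weight s m a c * weight s n b d := by
  have hab : a.Coprime b := (h.coprime_dvd_left ha).coprime_dvd_right hb
  have hcd : c.Coprime d := (h.coprime_dvd_left hc).coprime_dvd_right hd
  simp only [weight, h.coprime_mul_mul_iff ha hb hc hd, ite_zero_mul_ite_zero]
  congr 1
  rw [← Nat.div_mul_div_comm hc hd, Nat.totient_mul hab, Nat.totient_mul (h.div_coprime_div hc hd),
    Nat.primeFactors_mul hc0 hd0, prod_union hcd.disjoint_primeFactors]
  push_cast
  rw [Complex.natCast_mul_natCast_cpow]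
  ring

theorem moebius_mul_weight_mul {m n a b c d : ℕ} (h : m.Coprime n) (ha : a ∣ m) (hb : b ∣ n)
    (hc : c ∣ m) (hd : d ∣ n) (hc0 : c ≠ 0) (hd0 : d ≠ 0) :
    (μ (m * n / (a * b)) : ℂ) * μ (c * d) * weight s (m * n) (a * b) (c * d) =
      (μ (m / a) * μ c * weight s m a c) * (μ (n / b) * μ d * weight s n b d) := by
  rw [weight_mul s h ha hb hc hd hc0 hd0, ← Nat.div_mul_div_comm ha hb,
    isMultiplicative_moebius.map_mul_of_coprime (h.div_coprime_div ha hb),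
    isMultiplicative_moebius.map_mul_of_coprime ((h.coprime_dvd_left hc).coprime_dvd_right hd)]
  push_cast
  ring

theorem isMultiplicative_moebiusDoubleSum : (moebiusDoubleSum s).IsMultiplicative := by
  refine ⟨by simp [moebiusDoubleSum_apply, weight], fun {m n} h => ?_⟩
  simp only [moebiusDoubleSum_apply]
  exact h.sum_divisors_sum_divisors_mul (fun q w f => (μ (q / w) : ℂ) * μ f * weight s q w f)
    fun a ha b hb c hc d hd => moebius_mul_weight_mul s h (Nat.dvd_of_mem_divisors ha)
      (Nat.dvd_of_mem_divisors hb) (Nat.dvd_of_mem_divisors hc) (Nat.dvd_of_mem_divisors hd)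
      (Nat.pos_of_mem_divisors hc).ne' (Nat.pos_of_mem_divisors hd).ne'

theorem isMultiplicative_phiStarCpowProd : (phiStarCpowProd s).IsMultiplicative := by
  refine IsMultiplicative.iff_ne_zero.mpr
    ⟨by simp [phiStarCpowProd_apply, phiStar], fun {m n} hm hn h => ?_⟩
  rw [phiStarCpowProd_apply, phiStarCpowProd_apply, phiStarCpowProd_apply, phiStar_mul hm hn h,
    Nat.cast_mul, Complex.natCast_mul_natCast_cpow,
    h.prod_primeFactors_mul hm hn (fun _ p => 1 - (p : ℂ) ^ (s - 1)) (fun _ _ => rfl)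
      (fun _ _ => rfl)]
  push_cast
  ring

variable {p : ℕ}

theorem weight_one_right (q w : ℕ) :
    weight s q w 1 = Nat.totient w * ((Nat.totient q : ℂ) / q) * (w : ℂ) ^ (-s) := by
  simp [weight]

theorem moebiusDoubleSum_prime_pow (hp : p.Prime) (j : ℕ) :
    moebiusDoubleSum s (p ^ (j + 1)) =
      weight s (p ^ (j + 1)) (p ^ (j + 1)) 1 - weight s (p ^ (j + 1)) (p ^ j) 1 +
        weight s (p ^ (j + 1)) (p ^ j) p := by
  have hnot : ¬ p.Coprime (p ^ (j + 1)) :=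
    fun h => hp.coprime_iff_not_dvd.mp h (dvd_pow_self p (Nat.succ_ne_zero j))
  have hvanish : weight s (p ^ (j + 1)) (p ^ (j + 1)) p = 0 := if_neg hnot
  simp_rw [moebiusDoubleSum_apply, mul_assoc, ← mul_sum,
    hp.sum_divisors_prime_pow_moebius_mul (Nat.succ_ne_zero j),
    hp.sum_divisors_prime_pow_moebius_div_mul, hvanish]
  ring

theorem moebiusDoubleSum_prime_pow_eq (hp : p.Prime) {k : ℕ} (hk : k ≠ 0) :
    moebiusDoubleSum s (p ^ k) = phiStarCpowProd s (p ^ k) := by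
  have hp0 : (p : ℂ) ≠ 0 := Nat.cast_ne_zero.mpr hp.ne_zero
  have hx : (p : ℂ) ^ s ≠ 0 := Complex.cpow_ne_zero_iff.mpr (Or.inl hp0)
  obtain ⟨j, rfl⟩ := Nat.exists_eq_succ_of_ne_zero hk
  rw [moebiusDoubleSum_prime_pow s hp, phiStarCpowProd_apply, phiStar_prime_pow hp hk,
    Nat.primeFactors_prime_pow hk hp, prod_singleton, weight_one_right, weight_one_right]
  rcases j with _ | j
  · simp only [weight, zero_add, pow_one, pow_zero, Nat.coprime_one_right_eq_true, if_true,
      Nat.div_self hp.pos, Nat.totient_one, Nat.totient_prime hp, hp.primeFactors, prod_singleton,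
      Complex.cpow_neg, Complex.cpow_sub _ _ hp0, Complex.cpow_one]
    push_cast [Nat.cast_sub hp.one_le, show ¬ 2 ≤ 1 by omega, if_false, Complex.one_cpow]
    field_simp
    ring
  · simp only [weight, Nat.coprime_pow_right_iff (Nat.succ_pos j), Nat.coprime_self, hp.ne_one,
      if_false, Nat.totient_prime_pow hp (Nat.succ_pos _), Complex.natCast_pow_cpow,
      Complex.cpow_neg, Complex.cpow_sub _ _ hp0, Complex.cpow_one]
    push_cast [Nat.cast_sub hp.one_le, show 2 ≤ j + 2 by omega, if_true]
    field_simp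
    ring

theorem moebiusDoubleSum_eq : moebiusDoubleSum s = phiStarCpowProd s := by
  refine (IsMultiplicative.eq_iff_eq_on_prime_powers _ (isMultiplicative_moebiusDoubleSum s) _
    (isMultiplicative_phiStarCpowProd s)).mpr fun p k hp => ?_
  rcases eq_or_ne k 0 with rfl | hk
  · rw [pow_zero, (isMultiplicative_moebiusDoubleSum s).map_one,
      (isMultiplicative_phiStarCpowProd s).map_one]
  · exact moebiusDoubleSum_prime_pow_eq s hp hk

end DivisorSumIdentity

open DivisorSumIdentity in
theorem divisor_sum_identity_general (q : ℕ) (s : ℂ) :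
    ∑ w ∈ q.divisors, (μ (q / w) : ℂ) * (Nat.totient w : ℂ) *
      ∑ f ∈ q.divisors.filter (fun f => Nat.Coprime f w),
        (μ f : ℂ) * ((Nat.totient (q / f) : ℂ) / (q : ℂ)) * (w : ℂ) ^ (-s) *
          ∏ p ∈ f.primeFactors, (1 - (p : ℂ) ^ (-s))
    = (phiStar q : ℂ) * (q : ℂ) ^ (-s) * ∏ p ∈ q.primeFactors, (1 - (p : ℂ) ^ (s - 1)) := by
  rw [← phiStarCpowProd_apply, ← moebiusDoubleSum_eq, moebiusDoubleSum_apply]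
  refine sum_congr rfl fun w _ => ?_
  rw [mul_sum, sum_filter]
  refine sum_congr rfl fun f _ => ?_
  rw [weight]
  split_ifs <;> ring

/-- Lemma on sums over divisors of `q`:
`Σ_{w|q} μ(q/w) φ(w) Σ_{f|q, (f,w)=1} μ(f) (φ(q/f)/q) w^{-s} Π_{p|f}(1 - p^{-s})`
equals `φ*(q) · q^{-s} · Π_{p|q}(1 - p^{s-1})`. -/
theorem divisor_sum_identity (q : ℕ) (hq : 0 < q) (s : ℂ) :
    ∑ w ∈ q.divisors, (μ (q / w) : ℂ) * (Nat.totient w : ℂ) *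
      ∑ f ∈ q.divisors.filter (fun f => Nat.Coprime f w),
        (μ f : ℂ) * ((Nat.totient (q / f) : ℂ) / (q : ℂ)) * (w : ℂ) ^ (-s) *
          ∏ p ∈ f.primeFactors, (1 - (p : ℂ) ^ (-s))
    = (phiStar q : ℂ) * (q : ℂ) ^ (-s) * ∏ p ∈ q.primeFactors, (1 - (p : ℂ) ^ (s - 1)) :=
  divisor_sum_identity_general q s
end

section
/- Let q be a positive integer and m an integer coprime to q. Then the sum of χ(m) over all odd primitive Dirichlet characters χ modulo q equals (1/2) Σ_{uw=q, m≡1 (mod w)} μ(u)φ(w) − (1/2) Σ_{uw=q, m≡−1 (mod w)} μ(u)φ(w). -/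
/-!
Projecting onto odd characters by `χ(m) ↦ (χ(m) - χ(-m)) / 2` reduces the theorem to sums of
`χ(±m)` over primitive characters. Möbius inversion over the divisors of `q` lying above the
conductor gives `[χ primitive] = Σ_{w ∣ q, χ factors through w} μ(q/w)`, and the characters
mod `q` factoring through `w` are the characters mod `w`, whose values at `m` sum to `φ(w)` or
`0` according as `m ≡ 1 (mod w)` or not.
-/

open ArithmeticFunction Finset DirichletCharacter
open scoped ArithmeticFunction.Moebius

theorem Nat.sum_divisors_moebius {R : Type*} [Ring R] {n : ℕ} :
    ∑ d ∈ n.divisors, (μ d : R) = if n = 1 then 1 else 0 := by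
  rw [← ArithmeticFunction.one_apply, ← coe_moebius_mul_coe_zeta, coe_mul_zeta_apply]
  simp only [intCoe_apply]

theorem Nat.sum_divisors_filter_dvd_moebius_div {R : Type*} [Ring R] {c n : ℕ} (hn : n ≠ 0)
    (hc : c ∣ n) :
    ∑ w ∈ n.divisors with c ∣ w, (μ (n / w) : R) = if c = n then 1 else 0 := by
  have hc₀ : 0 < c := Nat.pos_of_dvd_of_pos hc (Nat.pos_of_ne_zero hn)
  calc ∑ w ∈ n.divisors with c ∣ w, (μ (n / w) : R)
      = ∑ d ∈ n.divisors with d ∣ n / c, (μ d : R) := by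
        rw [sum_filter, sum_filter, ← Nat.sum_div_divisors]
        refine sum_congr rfl fun d hd ↦ ?_
        have hdn := Nat.dvd_of_mem_divisors hd
        rw [Nat.div_div_self hdn hn]
        refine if_congr ?_ rfl rfl
        rw [Nat.dvd_div_iff_mul_dvd hdn, Nat.dvd_div_iff_mul_dvd hc, mul_comm]
    _ = ∑ d ∈ (n / c).divisors, (μ d : R) := by
        rw [Nat.divisors_filter_dvd_of_dvd hn (Nat.div_dvd_of_dvd hc)]
    _ = if c = n then 1 else 0 := by
        rw [Nat.sum_divisors_moebius]
        exact if_congr (by rw [Nat.div_eq_iff_eq_mul_left hc₀ hc, one_mul, eq_comm]) rfl rfl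

namespace DirichletCharacter

open scoped Classical in
theorem ite_isPrimitive_eq_sum_moebius {R : Type*} [CommRing R] {q : ℕ} [NeZero q]
    (χ : DirichletCharacter R q) :
    (if χ.IsPrimitive then 1 else 0 : R)
      = ∑ w ∈ q.divisors with χ.FactorsThrough w, (μ (q / w) : R) := by
  have hfilter :
      {w ∈ q.divisors | χ.FactorsThrough w} = {w ∈ q.divisors | χ.conductor ∣ w} :=
    filter_congr fun w hw ↦ χ.mem_conductorSet_iff_conductor_dvd (Nat.dvd_of_mem_divisors hw)
  rw [hfilter, Nat.sum_divisors_filter_dvd_moebius_div (NeZero.ne q) χ.conductor_dvd_level]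
  exact if_congr χ.isPrimitive_def rfl rfl

open scoped Classical in
theorem sub_apply_neg_eq_ite_odd {R : Type*} [CommRing R] [NoZeroDivisors R] {n : ℕ}
    (χ : DirichletCharacter R n) (a : ZMod n) :
    χ a - χ (-a) = if χ.Odd then 2 * χ a else 0 := by
  by_cases hodd : χ.Odd
  · rw [hodd.eval_neg, if_pos hodd]
    ring
  · rw [(χ.even_or_odd.resolve_right hodd).eval_neg, if_neg hodd, sub_self]

variable {F : Type*} [Field F] [IsAlgClosed F] [CharZero F] {q : ℕ} [NeZero q]

open scoped Classical in
theorem sum_factorsThrough_apply {w : ℕ} (hw : w ∣ q) {a : ℤ} (ha : IsCoprime a q) :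
    ∑ χ : DirichletCharacter F q with χ.FactorsThrough w, χ a
      = if (a : ZMod w) = 1 then (w.totient : F) else 0 := by
  have : NeZero w := ⟨fun h ↦ NeZero.ne q (Nat.eq_zero_of_zero_dvd (h ▸ hw))⟩
  have himage : ({χ | χ.FactorsThrough w} : Finset (DirichletCharacter F q))
      = univ.image (changeLevel hw) := by
    ext χ
    simp [FactorsThrough, hw, eq_comm]
  rw [himage, sum_image fun ψ _ ψ' _ h ↦ changeLevel_injective hw h]
  simp only [changeLevel_eq_cast_of_dvd' _ hw ha]
  exact sum_characters_eq F _

open scoped Classical in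
theorem sum_isPrimitive_apply {a : ℤ} (ha : IsCoprime a q) :
    ∑ χ : DirichletCharacter F q with χ.IsPrimitive, χ a
      = ∑ w ∈ q.divisors with (a : ZMod w) = 1, (μ (q / w) : F) * w.totient := by
  calc ∑ χ : DirichletCharacter F q with χ.IsPrimitive, χ a
      = ∑ χ : DirichletCharacter F q, (if χ.IsPrimitive then 1 else 0) * χ a := by
        simp only [sum_filter, ite_mul, one_mul, zero_mul]
    _ = ∑ w ∈ q.divisors,
          (μ (q / w) : F) * ∑ χ : DirichletCharacter F q with χ.FactorsThrough w, χ a := by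
        simp only [ite_isPrimitive_eq_sum_moebius, sum_mul, mul_sum, sum_filter, mul_ite, mul_zero,
          ite_mul, zero_mul]
        exact sum_comm
    _ = ∑ w ∈ q.divisors with (a : ZMod w) = 1, (μ (q / w) : F) * w.totient := by
        rw [sum_filter]
        refine sum_congr rfl fun w hw ↦ ?_
        rw [sum_factorsThrough_apply (Nat.dvd_of_mem_divisors hw) ha, mul_ite, mul_zero]

end DirichletCharacter

open scoped Classical in
/-- For `m` coprime to `q`, the sum of `χ(m)` over all odd primitive Dirichlet
characters mod `q` equals
`(1/2) Σ_{uw=q, m≡1 (w)} μ(u)φ(w) − (1/2) Σ_{uw=q, m≡−1 (w)} μ(u)φ(w)`. -/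
theorem sum_odd_primitive_characters (q : ℕ) [NeZero q] (m : ℤ) (hm : IsCoprime m (q : ℤ)) :
    ∑ χ : DirichletCharacter ℂ q,
        (if χ.IsPrimitive ∧ χ.Odd then χ (m : ZMod q) else 0)
    = (1 / 2 : ℂ) * (∑ w ∈ q.divisors,
          (if (m : ZMod w) = 1 then (μ (q / w) : ℂ) * (Nat.totient w : ℂ) else 0))
      - (1 / 2 : ℂ) * (∑ w ∈ q.divisors,
          (if (m : ZMod w) = -1 then (μ (q / w) : ℂ) * (Nat.totient w : ℂ) else 0)) := by
  have hodd_part :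
      ∑ χ : DirichletCharacter ℂ q, (if χ.IsPrimitive ∧ χ.Odd then χ (m : ZMod q) else 0)
      = 1 / 2 * (∑ χ : DirichletCharacter ℂ q with χ.IsPrimitive, χ (m : ZMod q)
        - ∑ χ : DirichletCharacter ℂ q with χ.IsPrimitive, χ ((-m : ℤ) : ZMod q)) := by
    rw [← sum_sub_distrib, mul_sum, sum_filter]
    refine sum_congr rfl fun χ _ ↦ ?_
    rw [ite_and, Int.cast_neg, sub_apply_neg_eq_ite_odd]
    split_ifs <;> ring
  rw [hodd_part, sum_isPrimitive_apply hm, sum_isPrimitive_apply hm.neg_left, mul_sub, sum_filter,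
    sum_filter]
  simp only [Int.cast_neg, neg_eq_iff_eq_neg]
end

section
/- For complex numbers x, y with |Re(x)| < 1/2, |Re(y)| < 1/2 and Re(x+y) > 0, one has the identity Γ(x+y)Γ(1/2−y)/Γ(1/2+x) + Γ(x+y)Γ(1/2−x)/Γ(1/2+y) + Γ(1/2−x)Γ(1/2−y)/Γ(1−x−y) = π^{1/2} · Γ((x+y)/2) Γ((1/2−x)/2) Γ((1/2−y)/2) / (Γ((1−x−y)/2) Γ((1/2+x)/2) Γ((1/2+y)/2)). -/
/-!
Put `a = x + y`, `b = 1/2 - x`, `c = 1/2 - y`, so that `a + b + c = 1`. Euler's reflection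
formula turns each term on the left into `Γ(a)Γ(b)Γ(c) sin(π·)/π`, while reflection together with
Legendre's duplication formula turns each quotient `Γ(s/2)/Γ((1-s)/2)` on the right into
`2^(1-s) Γ(s) cos(πs/2)/√π`. The powers of two multiply to `4`, and what remains is the
trigonometric identity `sin A + sin B + sin C = 4 cos(A/2) cos(B/2) cos(C/2)` for `A + B + C = π`.
-/

open Complex Real

namespace Complex

theorem ne_neg_natCast_of_re_pos {s : ℂ} (hs : 0 < s.re) (m : ℕ) : s ≠ -m := by
  rintro rfl
  simp only [neg_re, natCast_re, Left.neg_pos_iff] at hs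
  exact (Nat.cast_nonneg m).not_gt hs

theorem inv_Gamma_one_sub {s : ℂ} (hs : ∀ m : ℕ, s ≠ -m) :
    (Gamma (1 - s))⁻¹ = Gamma s * sin (π * s) / π := by
  have hΓ := Gamma_ne_zero hs
  have hrefl := Gamma_mul_Gamma_one_sub s
  by_cases hsin : sin (π * s) = 0
  -- `s` is then a positive integer, where `Γ (1 - s)` takes the junk value `0`
  · rw [hsin, div_zero, mul_eq_zero, or_iff_right hΓ] at hrefl
    rw [hrefl, hsin, inv_zero, mul_zero, zero_div]
  · have hΓ1 : Gamma (1 - s) = π / sin (π * s) / Gamma s :=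
      eq_div_of_mul_eq hΓ (by rw [mul_comm, hrefl])
    rw [hΓ1]
    field_simp

theorem Gamma_half_div_Gamma_one_sub_half {s : ℂ} (hs : ∀ m : ℕ, s ≠ -(2 * m + 1)) :
    Gamma (s / 2) / Gamma ((1 - s) / 2) = 2 ^ (1 - s) * Gamma s * cos (π * s / 2) / √π := by
  have hs' : ∀ m : ℕ, s / 2 + 1 / 2 ≠ -m := fun m h ↦ hs m (by linear_combination 2 * h)
  have hpi : (π : ℂ) = √π * √π := by rw [← ofReal_mul, Real.mul_self_sqrt pi_pos.le]
  have hdup := Gamma_mul_Gamma_add_half (s / 2)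
  rw [mul_div_cancel₀ s two_ne_zero] at hdup
  have hcos : sin (π * (s / 2 + 1 / 2)) = cos (π * s / 2) := by
    rw [show π * (s / 2 + 1 / 2) = π * s / 2 + π / 2 by ring, sin_add_pi_div_two]
  rw [div_eq_mul_inv, show (1 - s) / 2 = 1 - (s / 2 + 1 / 2) by ring, inv_Gamma_one_sub hs',
    hcos, ← mul_div_assoc, ← mul_assoc, hdup, hpi]
  field_simp

theorem sin_add_sin_add_sin_of_add_add_eq_pi {A B C : ℂ} (h : A + B + C = π) :
    sin A + sin B + sin C = 4 * cos (A / 2) * cos (B / 2) * cos (C / 2) := by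
  obtain rfl : C = π - A - B := by linear_combination h
  obtain ⟨u, rfl⟩ : ∃ u, A = 2 * u := ⟨A / 2, by ring⟩
  obtain ⟨v, rfl⟩ : ∃ v, B = 2 * v := ⟨B / 2, by ring⟩
  rw [show (π - 2 * u - 2 * v : ℂ) = π - 2 * (u + v) by ring, sin_pi_sub,
    show (π - 2 * (u + v) : ℂ) / 2 = π / 2 - (u + v) by ring, cos_pi_div_two_sub]
  simp only [mul_div_cancel_left₀ _ (two_ne_zero' ℂ), sin_two_mul, sin_add, cos_add]
  linear_combination (-2 * sin u * cos u) * sin_sq_add_cos_sq v +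
    (-2 * sin v * cos v) * sin_sq_add_cos_sq u

theorem Gamma_three_term_identity {a b c : ℂ} (habc : a + b + c = 1) (ha : ∀ m : ℕ, a ≠ -m)
    (hb : ∀ m : ℕ, b ≠ -m) (hc : ∀ m : ℕ, c ≠ -m) :
    Gamma a * Gamma c / Gamma (1 - b) + Gamma a * Gamma b / Gamma (1 - c) +
      Gamma b * Gamma c / Gamma (1 - a)
    = √π * Gamma (a / 2) * Gamma (b / 2) * Gamma (c / 2) /
        (Gamma ((1 - a) / 2) * Gamma ((1 - b) / 2) * Gamma ((1 - c) / 2)) := by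
  have odd_nonpole {s : ℂ} (hs : ∀ m : ℕ, s ≠ -m) (m : ℕ) : s ≠ -(2 * m + 1) := by
    simpa using hs (2 * m + 1)
  have hpi : (π : ℂ) = √π * √π := by rw [← ofReal_mul, Real.mul_self_sqrt pi_pos.le]
  have hpow : (2 : ℂ) ^ (1 - a) * 2 ^ (1 - b) * 2 ^ (1 - c) = 4 := by
    rw [← cpow_add _ _ two_ne_zero, ← cpow_add _ _ two_ne_zero,
      show 1 - a + (1 - b) + (1 - c) = (2 : ℕ) by linear_combination -habc]
    norm_num
  have htrig := sin_add_sin_add_sin_of_add_add_eq_pi (A := π * a) (B := π * b) (C := π * c)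
    (by linear_combination (π : ℂ) * habc)
  calc Gamma a * Gamma c / Gamma (1 - b) + Gamma a * Gamma b / Gamma (1 - c) +
        Gamma b * Gamma c / Gamma (1 - a)
      = Gamma a * Gamma b * Gamma c * (sin (π * a) + sin (π * b) + sin (π * c)) / π := by
        rw [div_eq_mul_inv, div_eq_mul_inv, div_eq_mul_inv, inv_Gamma_one_sub ha,
          inv_Gamma_one_sub hb, inv_Gamma_one_sub hc]
        ring
    _ = √π * (Gamma (a / 2) / Gamma ((1 - a) / 2)) * (Gamma (b / 2) / Gamma ((1 - b) / 2)) *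
          (Gamma (c / 2) / Gamma ((1 - c) / 2)) := by
        rw [Gamma_half_div_Gamma_one_sub_half (odd_nonpole ha),
          Gamma_half_div_Gamma_one_sub_half (odd_nonpole hb),
          Gamma_half_div_Gamma_one_sub_half (odd_nonpole hc), htrig,
          hpi, ← hpow]
        field_simp
    _ = _ := by ring

end Complex

/-- Young's gamma-function identity: for `|Re x| < 1/2`, `|Re y| < 1/2`, `Re(x+y) > 0`,
`Γ(x+y)Γ(1/2−y)/Γ(1/2+x) + Γ(x+y)Γ(1/2−x)/Γ(1/2+y) + Γ(1/2−x)Γ(1/2−y)/Γ(1−x−y)`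
`= √π · Γ((x+y)/2) Γ((1/2−x)/2) Γ((1/2−y)/2) / (Γ((1−x−y)/2) Γ((1/2+x)/2) Γ((1/2+y)/2))`. -/
theorem gamma_identity_young (x y : ℂ) (hx : |x.re| < 1 / 2) (hy : |y.re| < 1 / 2)
    (hxy : 0 < (x + y).re) :
    Complex.Gamma (x + y) * Complex.Gamma (1 / 2 - y) / Complex.Gamma (1 / 2 + x) +
      Complex.Gamma (x + y) * Complex.Gamma (1 / 2 - x) / Complex.Gamma (1 / 2 + y) +
      Complex.Gamma (1 / 2 - x) * Complex.Gamma (1 / 2 - y) / Complex.Gamma (1 - x - y)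
    = (Real.sqrt Real.pi : ℂ) *
        Complex.Gamma ((x + y) / 2) * Complex.Gamma ((1 / 2 - x) / 2) *
          Complex.Gamma ((1 / 2 - y) / 2) /
        (Complex.Gamma ((1 - x - y) / 2) * Complex.Gamma ((1 / 2 + x) / 2) *
          Complex.Gamma ((1 / 2 + y) / 2)) := by
  have hbx : 0 < (1 / 2 - x).re := by simpa using (abs_lt.mp hx).2
  have hcy : 0 < (1 / 2 - y).re := by simpa using (abs_lt.mp hy).2
  have h := Gamma_three_term_identity (a := x + y) (b := 1 / 2 - x) (c := 1 / 2 - y) (by ring)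
    (ne_neg_natCast_of_re_pos hxy) (ne_neg_natCast_of_re_pos hbx) (ne_neg_natCast_of_re_pos hcy)
  rwa [show 1 - (1 / 2 - x) = 1 / 2 + x by ring, show 1 - (1 / 2 - y) = 1 / 2 + y by ring,
    show 1 - (x + y) = 1 - x - y by ring] at h
end

section
/- Let σ > 1/2 with σ close to 1/2, q a positive integer, and x > 1. Then Σ_{n ≤ x, (n,q)=1} μ(n)²/φ_{2σ}(n) = L(2σ, χ_{0,q}) · (1 + O(x^{1−2σ})), where φ_{2σ}(n) = n^{2σ} Π_{p|n}(1 − p^{−2σ}) and χ_{0,q} is the principal character mod q. -/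
/-!
For squarefree `n`, the Euler product over `n`-smooth numbers gives
`μ(n)² / φ_r(n) = n^{-r} ∏_{p ∣ n} (1 - p^{-r})⁻¹ = ∑_{rad m = n} m^{-r}`, so the partial sum
equals `∑ m^{-r}` over the `m` coprime to `q` with `rad m ≤ N`. This lies between the partial sum
of `L(r, χ₀)` up to `N` and `L(r, χ₀)` itself, so the error is at most the tail
`∑_{m > N, (m, q) = 1} m^{-r}`. Splitting off the `q`-smooth part of `m` bounds this tail by
`N^{1-r} L(r, χ₀)`, uniformly in `q`; finally `⌊x⌋^{1-r} ≤ 2 x^{1-r}` for `1 < r < 2`.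
-/

open ArithmeticFunction Finset
open scoped ArithmeticFunction.Moebius ENNReal
open UniqueFactorizationMonoid (radical)

namespace Nat

theorem Coprime.coprime_of_mem_factoredNumbers {q d m : ℕ} (hm : m.Coprime q)
    (hd : d ∈ factoredNumbers q.primeFactors) : d.Coprime m := by
  refine Nat.coprime_of_dvd fun p hp hpd hpm => hp.one_lt.ne' ?_
  have hpq : p ∣ q := dvd_of_mem_primeFactors <| primeFactors_subset_of_mem_factoredNumbers hd
    (mem_primeFactors.mpr ⟨hp, hpd, ne_zero_of_mem_factoredNumbers hd⟩)
  exact eq_one_of_dvd_coprimes hm hpm hpq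

theorem eq_of_mul_eq_mul_of_mem_factoredNumbers {q d₁ d₂ m₁ m₂ : ℕ}
    (hd₁ : d₁ ∈ factoredNumbers q.primeFactors) (hd₂ : d₂ ∈ factoredNumbers q.primeFactors)
    (hm₁ : m₁.Coprime q) (hm₂ : m₂.Coprime q) (h : d₁ * m₁ = d₂ * m₂) : d₁ = d₂ :=
  dvd_antisymm
    ((hm₂.coprime_of_mem_factoredNumbers hd₁).dvd_of_dvd_mul_right (h ▸ dvd_mul_right d₁ m₁))
    ((hm₁.coprime_of_mem_factoredNumbers hd₂).dvd_of_dvd_mul_right (h ▸ dvd_mul_right d₂ m₂))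

-- `gcd m (q ^ m)` is the `q`-smooth part of `m`: every `p`-adic valuation of `m` is below `m`.
theorem gcd_pow_self_mem_factoredNumbers {q m : ℕ} (hq : q ≠ 0) (hm : m ≠ 0) :
    m.gcd (q ^ m) ∈ factoredNumbers q.primeFactors := by
  have hqm : q ^ m ≠ 0 := pow_ne_zero m hq
  refine mem_factoredNumbers_of_primeFactors_subset (Nat.gcd_ne_zero_right hqm) ?_
  rw [← primeFactors_pow q hm]
  exact primeFactors_mono (Nat.gcd_dvd_right m _) hqm

-- A prime `p ∣ q` dividing the cofactor would force `p ^ m ∣ gcd m (q ^ m)`,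
-- hence `p ^ (m + 1) ∣ m`.
theorem coprime_div_gcd_pow_self {q m : ℕ} (hm : m ≠ 0) : (m / m.gcd (q ^ m)).Coprime q := by
  set d := m.gcd (q ^ m)
  have hd : 0 < d := Nat.gcd_pos_of_pos_left _ (Nat.pos_of_ne_zero hm)
  refine Nat.coprime_of_dvd fun p hp hpm hpq => ?_
  have hcop : (m / d).Coprime (q ^ m / d) := coprime_div_gcd_div_gcd hd
  have hpd : p ^ m ∣ d := by
    have hpq' : ¬p ∣ q ^ m / d := fun h => hp.one_lt.ne' (eq_one_of_dvd_coprimes hcop hpm h)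
    have : (p ^ m).Coprime (q ^ m / d) := (hp.coprime_iff_not_dvd.mpr hpq').pow_left m
    refine this.dvd_of_dvd_mul_right ?_
    rw [Nat.mul_div_cancel' (Nat.gcd_dvd_right _ _)]
    exact pow_dvd_pow_of_dvd hpq m
  have hpm' : p ^ (m + 1) ∣ m := by
    have := mul_dvd_mul hpd hpm
    rwa [← pow_succ, Nat.mul_div_cancel' (Nat.gcd_dvd_left m (q ^ m))] at this
  have := Nat.le_of_dvd (Nat.pos_of_ne_zero hm) hpm'
  have := Nat.lt_pow_self (n := m + 1) hp.one_lt
  omega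

theorem setOf_radical_eq_image_mul {n : ℕ} (hn : Squarefree n) :
    {m : ℕ | m ≠ 0 ∧ radical m = n} = (n * ·) '' factoredNumbers n.primeFactors := by
  ext m
  constructor
  · rintro ⟨hm, rfl⟩
    have hdvd : radical m ∣ m := UniqueFactorizationMonoid.radical_dvd_self
    refine ⟨m / radical m, mem_factoredNumbers_of_primeFactors_subset ?_ ?_,
      Nat.mul_div_cancel' hdvd⟩
    · exact (Nat.div_ne_zero_iff_of_dvd hdvd).mpr ⟨hm, UniqueFactorizationMonoid.radical_ne_zero⟩
    · rw [primeFactors_radical]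
      exact primeFactors_mono (Nat.div_dvd_of_dvd hdvd) hm
  · rintro ⟨j, hj, rfl⟩
    have hj0 := ne_zero_of_mem_factoredNumbers hj
    refine ⟨mul_ne_zero hn.ne_zero hj0, ?_⟩
    rw [radical_eq_prod_primeFactors, primeFactors_mul hn.ne_zero hj0,
      union_eq_left.mpr (primeFactors_subset_of_mem_factoredNumbers hj),
      prod_primeFactors_of_squarefree hn]

theorem coprime_radical_left_iff {m : ℕ} (hm : m ≠ 0) (q : ℕ) :
    (radical m).Coprime q ↔ m.Coprime q :=
  ⟨fun h => (h.pow_left m).coprime_dvd_left (dvd_radical_pow_self hm),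
    fun h => h.coprime_dvd_left UniqueFactorizationMonoid.radical_dvd_self⟩

end Nat

-- `m^{-r}` in `ℝ≥0∞`, so that sums over arbitrary sets of integers need no summability side
-- conditions; it vanishes at `m = 0` when `r > 0`.
noncomputable def rpowNeg (r : ℝ) (m : ℕ) : ℝ≥0∞ := ENNReal.ofReal ((m : ℝ) ^ (-r))

section rpowNeg

variable {r : ℝ}

lemma rpowNeg_mul (r : ℝ) (a b : ℕ) : rpowNeg r (a * b) = rpowNeg r a * rpowNeg r b := by
  rw [rpowNeg, Nat.cast_mul, Real.mul_rpow (Nat.cast_nonneg a) (Nat.cast_nonneg b),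
    ENNReal.ofReal_mul (Real.rpow_nonneg (Nat.cast_nonneg a) _)]
  rfl

lemma rpowNeg_zero (hr : 0 < r) : rpowNeg r 0 = 0 := by
  simp [rpowNeg, Real.zero_rpow (neg_ne_zero.mpr hr.ne')]

lemma rpowNeg_one (r : ℝ) : rpowNeg r 1 = 1 := by simp [rpowNeg]

lemma rpowNeg_le_of_le (hr : 0 ≤ r) {a b : ℕ} (ha : 0 < a) (hab : a ≤ b) :
    rpowNeg r b ≤ rpowNeg r a :=
  ENNReal.ofReal_le_ofReal <| Real.rpow_le_rpow_of_nonpos (by exact_mod_cast ha)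
    (by exact_mod_cast hab) (neg_nonpos.mpr hr)

lemma natCast_mul_rpowNeg {N : ℕ} (hN : N ≠ 0) :
    (N : ℝ≥0∞) * rpowNeg r N = ENNReal.ofReal ((N : ℝ) ^ (1 - r)) := by
  rw [rpowNeg, ← ENNReal.ofReal_natCast, ← ENNReal.ofReal_mul (Nat.cast_nonneg N), sub_eq_add_neg,
    Real.rpow_add (by exact_mod_cast Nat.pos_of_ne_zero hN), Real.rpow_one]

lemma tsum_subtype_rpowNeg (hr : 1 < r) (s : Set ℕ) :
    ∑' m : s, rpowNeg r m = ENNReal.ofReal (∑' m : s, ((m : ℕ) : ℝ) ^ (-r)) :=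
  (ENNReal.ofReal_tsum_of_nonneg (fun _ => Real.rpow_nonneg (Nat.cast_nonneg _) _)
    ((Real.summable_nat_rpow.mpr (by linarith)).subtype s)).symm

lemma tsum_rpowNeg_ne_top (hr : 1 < r) : ∑' m, rpowNeg r m ≠ ⊤ := by
  rw [← tsum_univ, tsum_subtype_rpowNeg hr]
  exact ENNReal.ofReal_ne_top

lemma tsum_rpowNeg_mul_tsum_rpowNeg (s t : Set ℕ) :
    (∑' a : s, rpowNeg r a) * ∑' b : t, rpowNeg r b = ∑' p : s × t, rpowNeg r (p.1 * p.2) := by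
  simp_rw [rpowNeg_mul]
  rw [ENNReal.tsum_prod']
  simp_rw [ENNReal.tsum_mul_left, ENNReal.tsum_mul_right]

lemma tsum_factoredNumbers_rpow_neg (hr : 1 < r) {s : Finset ℕ} (hs : ∀ p ∈ s, p.Prime) :
    ∑' m : Nat.factoredNumbers s, ((m : ℕ) : ℝ) ^ (-r) = ∏ p ∈ s, (1 - (p : ℝ) ^ (-r))⁻¹ := by
  let f : ℕ →* ℝ :=
    { toFun n := (n : ℝ) ^ (-r)
      map_one' := by simp
      map_mul' a b := by push_cast; exact Real.mul_rpow (Nat.cast_nonneg a) (Nat.cast_nonneg b) }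
  have := EulerProduct.prod_filter_prime_geometric_eq_tsum_factoredNumbers (f := f)
    (Real.summable_nat_rpow.mpr (by linarith)) s
  rw [filter_true_of_mem hs] at this
  exact this.symm

lemma one_sub_rpow_neg_pos (hr : 0 < r) {p : ℕ} (hp : 1 < p) : 0 < 1 - (p : ℝ) ^ (-r) :=
  sub_pos.mpr <| Real.rpow_lt_one_of_one_lt_of_neg (by exact_mod_cast hp) (neg_neg_of_pos hr)

lemma moebius_sq_div_nonneg (hr : 0 < r) (n : ℕ) :
    0 ≤ (μ n : ℝ) ^ 2 / ((n : ℝ) ^ r * ∏ p ∈ n.primeFactors, (1 - (p : ℝ) ^ (-r))) :=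
  div_nonneg (sq_nonneg _) <| mul_nonneg (Real.rpow_nonneg (Nat.cast_nonneg n) r) <|
    prod_nonneg fun _ hp =>
      (one_sub_rpow_neg_pos hr (Nat.prime_of_mem_primeFactors hp).one_lt).le

theorem ofReal_moebius_sq_div_eq_tsum_radical_eq (hr : 1 < r) {n : ℕ} (hn : n ≠ 0) :
    ENNReal.ofReal ((μ n : ℝ) ^ 2 / ((n : ℝ) ^ r * ∏ p ∈ n.primeFactors, (1 - (p : ℝ) ^ (-r)))) =
      ∑' m : {m : ℕ | m ≠ 0 ∧ radical m = n}, rpowNeg r m := by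
  by_cases hsq : Squarefree n
  · rw [Nat.setOf_radical_eq_image_mul hsq, tsum_image _ (mul_right_injective₀ hn).injOn]
    simp only [rpowNeg_mul, ENNReal.tsum_mul_left]
    rw [tsum_subtype_rpowNeg hr,
      tsum_factoredNumbers_rpow_neg hr fun p hp => Nat.prime_of_mem_primeFactors hp,
      rpowNeg, ← ENNReal.ofReal_mul (Real.rpow_nonneg (Nat.cast_nonneg n) _)]
    have hμ : (μ n : ℝ) ^ 2 = 1 := by exact_mod_cast moebius_sq_eq_one_of_squarefree hsq
    rw [hμ, one_div, mul_inv, prod_inv_distrib, Real.rpow_neg (Nat.cast_nonneg n)]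
  · have : {m : ℕ | m ≠ 0 ∧ radical m = n} = ∅ := Set.eq_empty_of_forall_notMem fun m hm =>
      hsq (hm.2 ▸ UniqueFactorizationMonoid.squarefree_radical)
    rw [this, tsum_empty, moebius_eq_zero_of_not_squarefree hsq]
    simp

theorem ofReal_sum_moebius_sq_div (hr : 1 < r) {F : Finset ℕ} (hF : 0 ∉ F) :
    ENNReal.ofReal (∑ n ∈ F,
        (μ n : ℝ) ^ 2 / ((n : ℝ) ^ r * ∏ p ∈ n.primeFactors, (1 - (p : ℝ) ^ (-r)))) =
      ∑' m : {m : ℕ | m ≠ 0 ∧ radical m ∈ F}, rpowNeg r m := by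
  have hfib : {m : ℕ | m ≠ 0 ∧ radical m ∈ F} = ⋃ n ∈ F, {m : ℕ | m ≠ 0 ∧ radical m = n} := by
    ext m; simp
  rw [ENNReal.ofReal_sum_of_nonneg fun n _ => moebius_sq_div_nonneg (by linarith) n, hfib,
    Summable.tsum_finset_bUnion_disjoint
      (fun a _ b _ hab => Set.disjoint_left.mpr fun m ha hb => hab (ha.2.symm.trans hb.2))
      fun _ _ => ENNReal.summable]
  exact sum_congr rfl fun n hn =>
    ofReal_moebius_sq_div_eq_tsum_radical_eq hr (ne_of_mem_of_not_mem hn hF)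

lemma ofReal_tsum_coprime_rpow_neg (hr : 1 < r) (q : ℕ) :
    ENNReal.ofReal (∑' n : ℕ, if 0 < n ∧ n.Coprime q then (n : ℝ) ^ (-r) else 0) =
      ∑' m : {m : ℕ | 0 < m ∧ m.Coprime q}, rpowNeg r m := by
  rw [tsum_subtype_rpowNeg hr, _root_.tsum_subtype _ fun n : ℕ => (n : ℝ) ^ (-r)]
  simp only [Set.indicator_apply, Set.mem_ofPred_eq]

-- Each `m > N` is at least `⌊m / N⌋ * N`, and each value of `⌊m / N⌋` is taken `N` times.
theorem tsum_gt_rpowNeg_le (hr : 0 < r) {N : ℕ} (hN : N ≠ 0) :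
    ∑' m : {m : ℕ | N < m}, rpowNeg r m ≤
      ENNReal.ofReal ((N : ℝ) ^ (1 - r)) * ∑' m, rpowNeg r m := by
  have : NeZero N := ⟨hN⟩
  have hle : ∀ m, {m : ℕ | N < m}.indicator (rpowNeg r) m ≤ rpowNeg r (m / N * N) := by
    intro m
    rw [Set.indicator_apply]
    split_ifs with hm
    · exact rpowNeg_le_of_le hr.le
        (Nat.mul_pos (Nat.div_pos hm.le (Nat.pos_of_ne_zero hN)) (Nat.pos_of_ne_zero hN))
        (Nat.div_mul_le_self m N)
    · exact zero_le
  calc ∑' m : {m : ℕ | N < m}, rpowNeg r m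
      ≤ ∑' m, rpowNeg r (m / N * N) := _root_.tsum_subtype _ (rpowNeg r) ▸ ENNReal.tsum_le_tsum hle
    _ = ∑' p : ℕ × Fin N, rpowNeg r (p.1 * N) :=
        (Nat.divModEquiv N).tsum_eq fun p => rpowNeg r (p.1 * N)
    _ = N * rpowNeg r N * ∑' m, rpowNeg r m := by
      rw [ENNReal.tsum_prod']
      simp_rw [tsum_fintype, sum_const, card_univ, Fintype.card_fin, nsmul_eq_mul,
        rpowNeg_mul, ENNReal.tsum_mul_left, ENNReal.tsum_mul_right]
      ring
    _ = _ := by rw [natCast_mul_rpowNeg hN]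

lemma tsum_rpowNeg_le_tsum_factoredNumbers_mul_tsum_coprime (hr : 0 < r) {q : ℕ} (hq : q ≠ 0) :
    ∑' m, rpowNeg r m ≤ (∑' d : Nat.factoredNumbers q.primeFactors, rpowNeg r d) *
      ∑' m : {m : ℕ | 0 < m ∧ m.Coprime q}, rpowNeg r m := by
  rw [tsum_rpowNeg_mul_tsum_rpowNeg]
  let split : {m : ℕ | m ≠ 0} →
      Nat.factoredNumbers q.primeFactors × {m : ℕ | 0 < m ∧ m.Coprime q} := fun m =>
    (⟨(m : ℕ).gcd (q ^ (m : ℕ)), Nat.gcd_pow_self_mem_factoredNumbers hq m.2⟩,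
      ⟨m / (m : ℕ).gcd (q ^ (m : ℕ)),
        Nat.div_pos (Nat.gcd_le_left _ (Nat.pos_of_ne_zero m.2))
          (Nat.gcd_pos_of_pos_left _ (Nat.pos_of_ne_zero m.2)),
        Nat.coprime_div_gcd_pow_self m.2⟩)
  have hsplit : ∀ m, ((split m).1 : ℕ) * (split m).2 = m := fun m =>
    Nat.mul_div_cancel' (Nat.gcd_dvd_left _ _)
  calc ∑' m, rpowNeg r m
      = ∑' m : {m : ℕ | m ≠ 0}, rpowNeg r m :=
        (tsum_subtype_eq_of_support_subset fun m hm (h0 : m = 0) =>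
          hm (h0 ▸ rpowNeg_zero hr)).symm
    _ = ∑' m : {m : ℕ | m ≠ 0}, rpowNeg r ((split m).1 * (split m).2) := by simp_rw [hsplit]
    _ ≤ _ := ENNReal.tsum_comp_le_tsum_of_injective (f := split)
        (fun a b h => Subtype.ext <| by rw [← hsplit a, ← hsplit b, h])
        fun p => rpowNeg r (p.1 * p.2)

-- With `D = ∑_{d q-smooth} d^{-r}`, unique factorisation `m = d * m'` gives
-- `D * (coprime tail) ≤ (full tail) ≤ N^{1-r} ζ(r) ≤ N^{1-r} D L(r, χ₀)`; then cancel `D`.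
theorem tsum_coprime_gt_rpowNeg_le (hr : 1 < r) {q N : ℕ} (hq : q ≠ 0) (hN : N ≠ 0) :
    ∑' m : {m : ℕ | 0 < m ∧ m.Coprime q ∧ N < m}, rpowNeg r m ≤
      ENNReal.ofReal ((N : ℝ) ^ (1 - r)) * ∑' m : {m : ℕ | 0 < m ∧ m.Coprime q}, rpowNeg r m := by
  set D := ∑' d : Nat.factoredNumbers q.primeFactors, rpowNeg r d
  have hD0 : D ≠ 0 := by
    refine ne_of_gt (lt_of_lt_of_le one_pos ?_)
    rw [← rpowNeg_one r]
    exact ENNReal.le_tsum (f := fun d : Nat.factoredNumbers q.primeFactors => rpowNeg r d)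
      ⟨1, Nat.mem_factoredNumbers_of_primeFactors_subset one_ne_zero (by simp)⟩
  have hDtop : D ≠ ⊤ := ne_top_of_le_ne_top (tsum_rpowNeg_ne_top hr)
    (by simpa using ENNReal.tsum_mono_subtype (rpowNeg r) (Set.subset_univ _))
  have hmul : D * ∑' m : {m : ℕ | 0 < m ∧ m.Coprime q ∧ N < m}, rpowNeg r m ≤
      ∑' m : {m : ℕ | N < m}, rpowNeg r m := by
    let mul : Nat.factoredNumbers q.primeFactors × {m : ℕ | 0 < m ∧ m.Coprime q ∧ N < m} →
        {m : ℕ | N < m} := fun p => ⟨p.1 * p.2, p.2.2.2.2.trans_le <|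
          Nat.le_mul_of_pos_left _ (Nat.pos_of_ne_zero (Nat.ne_zero_of_mem_factoredNumbers p.1.2))⟩
    rw [tsum_rpowNeg_mul_tsum_rpowNeg]
    refine ENNReal.tsum_comp_le_tsum_of_injective (f := mul) (fun a b h => ?_) (rpowNeg r ·)
    have h' : (a.1 : ℕ) * a.2 = b.1 * b.2 := congrArg Subtype.val h
    have hd := Nat.eq_of_mul_eq_mul_of_mem_factoredNumbers a.1.2 b.1.2 a.2.2.2.1 b.2.2.2.1 h'
    rw [hd] at h'
    exact Prod.ext (Subtype.ext hd) (Subtype.ext (Nat.eq_of_mul_eq_mul_left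
      (Nat.pos_of_ne_zero (Nat.ne_zero_of_mem_factoredNumbers b.1.2)) h'))
  rw [← ENNReal.mul_le_mul_iff_right hD0 hDtop, mul_left_comm]
  calc _ ≤ _ := hmul
    _ ≤ _ := tsum_gt_rpowNeg_le (by linarith) hN
    _ ≤ _ := by gcongr; exact tsum_rpowNeg_le_tsum_factoredNumbers_mul_tsum_coprime (by linarith) hq

lemma tsum_radical_mem_le_tsum_coprime (q N : ℕ) :
    ∑' m : {m : ℕ | m ≠ 0 ∧ radical m ∈ (Icc 1 N).filter (·.Coprime q)}, rpowNeg r m ≤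
      ∑' m : {m : ℕ | 0 < m ∧ m.Coprime q}, rpowNeg r m :=
  ENNReal.tsum_mono_subtype _ fun _ ⟨hm, hrad⟩ =>
    ⟨Nat.pos_of_ne_zero hm, (Nat.coprime_radical_left_iff hm q).mp (mem_filter.mp hrad).2⟩

lemma tsum_coprime_le_tsum_radical_mem_add (hr : 1 < r) {q N : ℕ} (hq : q ≠ 0) (hN : N ≠ 0) :
    ∑' m : {m : ℕ | 0 < m ∧ m.Coprime q}, rpowNeg r m ≤
      ∑' m : {m : ℕ | m ≠ 0 ∧ radical m ∈ (Icc 1 N).filter (·.Coprime q)}, rpowNeg r m +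
        ENNReal.ofReal ((N : ℝ) ^ (1 - r)) * ∑' m : {m : ℕ | 0 < m ∧ m.Coprime q}, rpowNeg r m := by
  have hsub : {m : ℕ | 0 < m ∧ m.Coprime q} ⊆
      {m : ℕ | m ≠ 0 ∧ radical m ∈ (Icc 1 N).filter (·.Coprime q)} ∪
        {m : ℕ | 0 < m ∧ m.Coprime q ∧ N < m} := by
    rintro m ⟨hm, hmq⟩
    by_cases hmN : m ≤ N
    · refine Or.inl ⟨hm.ne', mem_filter.mpr ⟨mem_Icc.mpr ⟨Nat.radical_pos m, ?_⟩,
        (Nat.coprime_radical_left_iff hm.ne' q).mpr hmq⟩⟩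
      exact (Nat.radical_le_self_iff.mpr hm.ne').trans hmN
    · exact Or.inr ⟨hm, hmq, not_le.mp hmN⟩
  calc _ ≤ _ := ENNReal.tsum_mono_subtype _ hsub
    _ ≤ _ := ENNReal.tsum_union_le _ _ _
    _ ≤ _ := by gcongr; exact tsum_coprime_gt_rpowNeg_le hr hq hN

theorem abs_sum_moebius_sq_div_sub_tsum_le (hr : 1 < r) {q N : ℕ} (hq : q ≠ 0) (hN : N ≠ 0) :
    |(∑ n ∈ (Icc 1 N).filter (·.Coprime q),
        (μ n : ℝ) ^ 2 / ((n : ℝ) ^ r * ∏ p ∈ n.primeFactors, (1 - (p : ℝ) ^ (-r)))) -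
      ∑' n : ℕ, if 0 < n ∧ n.Coprime q then (n : ℝ) ^ (-r) else 0| ≤
      (N : ℝ) ^ (1 - r) * ∑' n : ℕ, if 0 < n ∧ n.Coprime q then (n : ℝ) ^ (-r) else 0 := by
  set S := ∑ n ∈ (Icc 1 N).filter (·.Coprime q),
    (μ n : ℝ) ^ 2 / ((n : ℝ) ^ r * ∏ p ∈ n.primeFactors, (1 - (p : ℝ) ^ (-r)))
  set L := ∑' n : ℕ, if 0 < n ∧ n.Coprime q then (n : ℝ) ^ (-r) else 0
  have hS0 : 0 ≤ S := sum_nonneg fun n _ => moebius_sq_div_nonneg (by linarith) n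
  have hL0 : 0 ≤ L := tsum_nonneg fun n => by positivity
  have hc0 : 0 ≤ (N : ℝ) ^ (1 - r) := by positivity
  have hS : ENNReal.ofReal S = _ := ofReal_sum_moebius_sq_div hr (by simp)
  have hL : ENNReal.ofReal L = _ := ofReal_tsum_coprime_rpow_neg hr q
  have hSL : S ≤ L := by
    rw [← ENNReal.ofReal_le_ofReal_iff hL0, hS, hL]
    exact tsum_radical_mem_le_tsum_coprime q N
  have hLS : L ≤ S + (N : ℝ) ^ (1 - r) * L := by
    rw [← ENNReal.ofReal_le_ofReal_iff (by positivity), ENNReal.ofReal_add hS0 (by positivity),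
      ENNReal.ofReal_mul hc0, hS, hL]
    exact tsum_coprime_le_tsum_radical_mem_add hr hq hN
  rw [abs_sub_comm, abs_of_nonneg (sub_nonneg.mpr hSL)]
  linarith

end rpowNeg

lemma natFloor_rpow_le_two_mul_rpow {x t : ℝ} (hx : 1 ≤ x) (ht : -1 ≤ t) (ht' : t ≤ 0) :
    (⌊x⌋₊ : ℝ) ^ t ≤ 2 * x ^ t := by
  have hfloor : x / 2 ≤ ⌊x⌋₊ := by
    have h1 : (1 : ℝ) ≤ ⌊x⌋₊ := by exact_mod_cast Nat.one_le_floor_iff x |>.mpr hx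
    linarith [Nat.lt_floor_add_one x]
  calc (⌊x⌋₊ : ℝ) ^ t ≤ (x / 2) ^ t := Real.rpow_le_rpow_of_nonpos (by positivity) hfloor ht'
    _ = (2 : ℝ) ^ (-t) * x ^ t := by
      rw [Real.div_rpow (by positivity) zero_le_two, Real.rpow_neg zero_le_two, div_eq_inv_mul]
    _ ≤ 2 * x ^ t := by
      gcongr
      simpa using Real.rpow_le_rpow_of_exponent_le one_le_two (show -t ≤ 1 by linarith)

/-- For `s > 1/2` close to `1/2`, `q ≥ 1` and `x > 1`:
`Σ_{n ≤ x, (n,q)=1} μ(n)²/φ_{2s}(n) = L(2s, χ_{0,q}) (1 + O(x^{1−2s}))`,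
where `φ_{2s}(n) = n^{2s} Π_{p|n}(1 − p^{−2s})` and
`L(2s, χ_{0,q}) = Σ_{(n,q)=1} n^{−2s}`. -/
theorem sum_moebius_sq_div_phi_asymptotic :
    ∃ δ C : ℝ, 0 < δ ∧ 0 < C ∧ ∀ s : ℝ, 1 / 2 < s → s < 1 / 2 + δ →
      ∀ q : ℕ, 0 < q → ∀ x : ℝ, 1 < x →
        |(∑ n ∈ (Finset.Icc 1 ⌊x⌋₊).filter (fun n => Nat.Coprime n q),
              (μ n : ℝ) ^ 2 /
                ((n : ℝ) ^ (2 * s) * ∏ p ∈ n.primeFactors, (1 - (p : ℝ) ^ (-(2 * s))))) -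
            (∑' n : ℕ, if 0 < n ∧ Nat.Coprime n q then (n : ℝ) ^ (-(2 * s)) else 0)|
          ≤ C * x ^ (1 - 2 * s) *
              (∑' n : ℕ, if 0 < n ∧ Nat.Coprime n q then (n : ℝ) ^ (-(2 * s)) else 0) := by
  refine ⟨1 / 2, 2, by norm_num, by norm_num, fun s hs₁ hs₂ q hq x hx => ?_⟩
  have hN : ⌊x⌋₊ ≠ 0 := (Nat.floor_pos.mpr hx.le).ne'
  calc _ ≤ (⌊x⌋₊ : ℝ) ^ (1 - 2 * s) *
        ∑' n : ℕ, if 0 < n ∧ n.Coprime q then (n : ℝ) ^ (-(2 * s)) else 0 :=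
        abs_sum_moebius_sq_div_sub_tsum_le (by linarith) hq.ne' hN
    _ ≤ _ := by
      gcongr
      exact natFloor_rpow_le_two_mul_rpow hx.le (by linarith) (by linarith)
end
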